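/- No cost-optimal basic tree contains two adjacent strc nodes (a strc node one of whose children is again a strc node), since merging them into a single strc node yields a tree of strictly smaller cost representing the same sequence. -/
import Mathlib


inductive TT : Type where
  | con : ℕ → TT
  | vec : ℕ → ℤ → TT → TT
  | idx : List ℤ → TT → TT
  | strc : List (ℤ × TT) → TT

theorem TT.sizeOf_snd_lt {ps : List (ℤ × TT)} (p : {x // x ∈ ps}) :
    sizeOf (p.1).2 < sizeOf (TT.strc ps) := by
  obtain ⟨⟨a, b⟩, hp⟩ := p
  have := List.sizeOf_lt_of_mem hp
  simp at this ⊢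
  omega

def flatten : TT → List ℤ
  | .con c => (List.range c).map (fun i => (i : ℤ))
  | .vec c d C => (List.range c).flatMap (fun i => (flatten C).map (· + (i : ℤ) * d))
  | .idx I C => I.flatMap (fun s => (flatten C).map (· + s))
  | .strc ps => ps.attach.flatMap (fun p => (flatten p.1.2).map (· + p.1.1))
decreasing_by
  all_goals first
  | exact TT.sizeOf_snd_lt _
  | decreasing_tactic

def cost (kc kv ki ks kl : ℕ) : TT → ℕ
  | .con _ => kc
  | .vec _ _ C => kv + cost kc kv ki ks kl C
  | .idx I C => ki + I.length * kl + cost kc kv ki ks kl C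
  | .strc ps => ks + 2 * ps.length * kl + (ps.attach.map (fun p => cost kc kv ki ks kl p.1.2)).sum
decreasing_by
  all_goals first
  | exact TT.sizeOf_snd_lt _
  | decreasing_tactic

/-- Whether the root node is a `strc` node. -/
def IsStrc : TT → Prop
  | .strc _ => True
  | _ => False

/-- The tree contains two adjacent `strc` nodes: a `strc` node one of whose
children is again a `strc` node. -/
def HasAdjStrc : TT → Prop
  | .con _ => False
  | .vec _ _ C => HasAdjStrc C
  | .idx _ C => HasAdjStrc C
  | .strc ps => (∃ p ∈ ps.attach, IsStrc p.1.2) ∨ ∃ p ∈ ps.attach, HasAdjStrc p.1.2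
decreasing_by
  all_goals first
  | exact TT.sizeOf_snd_lt _
  | decreasing_tactic


theorem attach_flatMap {α β : Type} (ps : List α) (g : α → List β) :
    ps.attach.flatMap (fun p => g p.1) = ps.flatMap g := by
  conv_rhs => rw [← List.attach_map_subtype_val ps, List.flatMap_map]

theorem attach_map_sum {α : Type} (ps : List α) (f : α → ℕ) :
    (ps.attach.map (fun p => f p.1)).sum = (ps.map f).sum := by
  conv_rhs => rw [← List.attach_map_subtype_val ps, List.map_map]
  rfl

theorem flatten_strc (ps : List (ℤ × TT)) :
    flatten (.strc ps) = ps.flatMap (fun p => (flatten p.2).map (· + p.1)) := by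
  rw [flatten]
  exact attach_flatMap ps (fun q => (flatten q.2).map (· + q.1))

theorem cost_strc (kc kv ki ks kl : ℕ) (ps : List (ℤ × TT)) :
    cost kc kv ki ks kl (.strc ps)
      = ks + 2 * ps.length * kl + (ps.map (fun p => cost kc kv ki ks kl p.2)).sum := by
  rw [cost]
  rw [attach_map_sum ps (fun p => cost kc kv ki ks kl p.2)]

theorem isStrc_elim {C : TT} (h : IsStrc C) : ∃ qs, C = .strc qs := by
  cases C with
  | strc qs => exact ⟨qs, rfl⟩
  | _ => simp [IsStrc] at h

theorem mem_sizeOf_lt {ps : List (ℤ × TT)} {s : ℤ} {C : TT} (h : (s, C) ∈ ps) :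
    sizeOf C < sizeOf (TT.strc ps) :=
  TT.sizeOf_snd_lt ⟨(s, C), h⟩

theorem improve (kc kv ki ks : ℕ) (hs : 0 < ks) (T : TT) (h : HasAdjStrc T) :
    ∃ T', flatten T' = flatten T ∧ cost kc kv ki ks 1 T' < cost kc kv ki ks 1 T := by
  match T with
  | .con c => rw [HasAdjStrc] at h; exact absurd h not_false
  | .vec c d C =>
      rw [HasAdjStrc] at h
      obtain ⟨C', h1, h2⟩ := improve kc kv ki ks hs C h
      refine ⟨.vec c d C', ?_, ?_⟩
      · rw [flatten, flatten, h1]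
      · rw [cost, cost]; omega
  | .idx I C =>
      rw [HasAdjStrc] at h
      obtain ⟨C', h1, h2⟩ := improve kc kv ki ks hs C h
      refine ⟨.idx I C', ?_, ?_⟩
      · rw [flatten, flatten, h1]
      · rw [cost, cost]; omega
  | .strc ps =>
      rw [HasAdjStrc] at h
      rcases h with ⟨⟨⟨s, C⟩, hmem⟩, _, hstrc⟩ | ⟨⟨⟨s, C⟩, hmem⟩, _, hadj⟩
      · obtain ⟨qs, rfl⟩ := isStrc_elim hstrc
        obtain ⟨l, r, hps⟩ := List.append_of_mem hmem
        subst hps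
        have key : (qs.map (fun q => (q.1 + s, q.2))).flatMap
              (fun p => (flatten p.2).map (· + p.1))
            = (qs.flatMap (fun p => (flatten p.2).map (· + p.1))).map (· + s) := by
          rw [List.map_flatMap, List.flatMap_map]
          congr 1
          funext q
          rw [List.map_map]
          congr 1
          funext x
          simp only [Function.comp_apply]
          omega
        refine ⟨.strc (l ++ qs.map (fun q => (q.1 + s, q.2)) ++ r), ?_, ?_⟩
        · simp only [flatten_strc, List.flatMap_append, List.flatMap_cons,
            List.append_assoc]
          rw [key]
        · rw [cost_strc, cost_strc]
          simp only [List.map_append, List.map_cons, List.sum_append, List.sum_cons,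
            List.map_map, List.length_append, List.length_cons, List.length_map,
            cost_strc]
          have hc : (List.map ((fun p => cost kc kv ki ks 1 p.2) ∘ fun q => (q.1 + s, q.2)) qs)
              = List.map (fun p => cost kc kv ki ks 1 p.2) qs := by
            apply List.map_congr_left; intro q _; rfl
          rw [hc]
          omega
      · obtain ⟨l, r, hps⟩ := List.append_of_mem hmem
        have hmem2 : (s, C) ∈ ps := hmem
        obtain ⟨C', h1, h2⟩ := improve kc kv ki ks hs C hadj
        subst hps
        refine ⟨.strc (l ++ (s, C') :: r), ?_, ?_⟩
        · simp only [flatten_strc, List.flatMap_append, List.flatMap_cons, h1]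
        · rw [cost_strc, cost_strc]
          simp only [List.map_append, List.map_cons, List.sum_append, List.sum_cons,
            List.length_append, List.length_cons]
          omega
decreasing_by
  all_goals first
    | exact mem_sizeOf_lt hmem2
    | (simp; try omega)

theorem stmt8 (kc kv ki ks : ℕ) (hc : 0 < kc) (hv : 0 < kv) (hi : 0 < ki) (hs : 0 < ks)
    (D : List ℤ) (T : TT) (hT : flatten T = D)
    (hopt : ∀ T' : TT, flatten T' = D → cost kc kv ki ks 1 T ≤ cost kc kv ki ks 1 T') :
    ¬ HasAdjStrc T := by
  intro h
  obtain ⟨T', h1, h2⟩ := improve kc kv ki ks hs T h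
  have := hopt T' (h1.trans hT)
  omega
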